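/- Let M1, M2 be integers with 4 ≤ M1 ≤ M2, and let D* = ([0,1/2]×[0,1/2]) \ ([0,1/M1]×[0,1/M2]). Then 4·∬_{D*} 1/(4 − 2·cos(2πx) − 2·cos(2πy)) dx dy ≥ (1/(2π))·log M1 − 1/4, where log denotes the natural logarithm. -/

import Mathlib

/-!
Since `2 - 2 cos u ≤ u²`, the integrand dominates `1 / (4π² (x² + y²))`, and `D*` contains the
strip `(1/M1, 1/2] × (0, 1/2]`. There the inner integral in `y` is `arctan (1/(2x)) / x`, which
is at least `π/(2x) - 2` because `arctan t = π/2 - arctan t⁻¹` and `arctan s ≤ s`. Integrating in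
`x` gives `(π/2) log (M1/2) - 1 + 2/M1`, and the constant lost is absorbed by `1/4` because
`2π log 2 + 4 ≤ π²`.
-/

open Real MeasureTheory Set

lemma Real.arctan_le_self {t : ℝ} (ht : 0 ≤ t) : arctan t ≤ t := by
  rcases lt_or_ge t (π / 2) with ht' | ht'
  · calc arctan t ≤ arctan (tan t) := arctan_mono (le_tan ht ht')
      _ = t := arctan_tan (by linarith [pi_pos]) ht'
  · exact (arctan_lt_pi_div_two t).le.trans ht'

lemma Real.pi_div_two_sub_div_le_arctan_div {x c : ℝ} (hx : 0 < x) (hc : 0 < c) :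
    π / 2 - x / c ≤ arctan (c / x) := by
  rw [← inv_div x c, arctan_inv_of_pos (by positivity)]
  linarith [arctan_le_self (div_pos hx hc).le]

lemma Real.cos_two_pi_mul_lt_one {x : ℝ} (h0 : 0 < x) (h1 : x < 1) : cos (2 * π * x) < 1 := by
  refine (cos_le_one _).lt_of_ne fun h => ?_
  have := (cos_eq_one_iff_of_lt_of_lt (by nlinarith [pi_pos]) (by nlinarith [pi_pos])).mp h
  nlinarith [pi_pos]

/-- The Fourier symbol of the five-point discrete Laplacian on `ℤ²`. -/
noncomputable def latticeLaplacianSymbol (p : ℝ × ℝ) : ℝ :=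
  4 - 2 * cos (2 * π * p.1) - 2 * cos (2 * π * p.2)

namespace latticeLaplacianSymbol

lemma pos {p : ℝ × ℝ} (h : p.1 ∈ Ioo 0 1 ∨ p.2 ∈ Ioo 0 1) : 0 < latticeLaplacianSymbol p := by
  unfold latticeLaplacianSymbol
  have := cos_le_one (2 * π * p.1)
  have := cos_le_one (2 * π * p.2)
  rcases h with ⟨h0, h1⟩ | ⟨h0, h1⟩
  · linarith [cos_two_pi_mul_lt_one h0 h1]
  · linarith [cos_two_pi_mul_lt_one h0 h1]

lemma nonneg (p : ℝ × ℝ) : 0 ≤ latticeLaplacianSymbol p := by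
  unfold latticeLaplacianSymbol
  linarith [cos_le_one (2 * π * p.1), cos_le_one (2 * π * p.2)]

lemma le_four_mul_pi_sq_mul (p : ℝ × ℝ) :
    latticeLaplacianSymbol p ≤ 4 * π ^ 2 * (p.1 ^ 2 + p.2 ^ 2) := by
  unfold latticeLaplacianSymbol
  nlinarith [one_sub_sq_div_two_le_cos (x := 2 * π * p.1),
    one_sub_sq_div_two_le_cos (x := 2 * π * p.2)]

end latticeLaplacianSymbol

/-- The set is contained in a compact set on which the symbol does not vanish. -/
lemma integrableOn_one_div_latticeLaplacianSymbol {a b c : ℝ} (ha : 0 < a) (hb : 0 < b)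
    (hc : c < 1) :
    IntegrableOn (fun p => 1 / latticeLaplacianSymbol p)
      ((Icc 0 c ×ˢ Icc 0 c) \ (Icc 0 a ×ˢ Icc 0 b)) := by
  set K := (Icc 0 c ×ˢ Icc 0 c) \ (Iio a ×ˢ Iio b)
  have hK : IsCompact K := (isCompact_Icc.prod isCompact_Icc).diff (isOpen_Iio.prod isOpen_Iio)
  have hpos : ∀ p ∈ K, 0 < latticeLaplacianSymbol p := by
    rintro ⟨x, y⟩ ⟨⟨⟨-, hxc⟩, -, hyc⟩, hab⟩
    refine latticeLaplacianSymbol.pos ?_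
    by_cases hxa : x < a
    · exact Or.inr ⟨hb.trans_le (not_lt.mp fun hyb => hab ⟨hxa, hyb⟩), by simp; linarith⟩
    · exact Or.inl ⟨ha.trans_le (not_lt.mp hxa), by simp; linarith⟩
  have hcont : ContinuousOn (fun p => 1 / latticeLaplacianSymbol p) K :=
    continuousOn_const.div (by unfold latticeLaplacianSymbol; fun_prop)
      fun p hp => (hpos p hp).ne'
  refine (hcont.integrableOn_compact hK).mono_set ?_
  rintro ⟨x, y⟩ ⟨hsq, hR⟩
  exact ⟨hsq, fun h => hR ⟨⟨hsq.1.1, h.1.le⟩, hsq.2.1, h.2.le⟩⟩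

lemma integral_one_div_sq_add_sq {x : ℝ} (hx : 0 < x) (c : ℝ) :
    ∫ y in (0 : ℝ)..c, 1 / (x ^ 2 + y ^ 2) = arctan (c / x) / x := by
  have hscale : ∀ y : ℝ, 1 / (x ^ 2 + y ^ 2) = x⁻¹ ^ 2 * (1 + (y / x) ^ 2)⁻¹ := by
    intro y
    field_simp
  simp only [hscale, intervalIntegral.integral_const_mul,
    intervalIntegral.integral_comp_div (fun t => (1 + t ^ 2)⁻¹) hx.ne', integral_inv_one_add_sq,
    zero_div, arctan_zero, sub_zero, smul_eq_mul]
  field_simp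

lemma integral_arctan_div_div_ge {a b c : ℝ} (ha : 0 < a) (hab : a ≤ b) (hc : 0 < c) :
    π / 2 * log (b / a) - (b - a) / c ≤ ∫ x in a..b, arctan (c / x) / x := by
  have hne : ∀ x ∈ uIcc a b, x ≠ 0 := by
    rw [uIcc_of_le hab]; exact fun x hx => (ha.trans_le hx.1).ne'
  have hinv : ContinuousOn (fun x : ℝ => 1 / x) (uIcc a b) :=
    continuousOn_const.div continuousOn_id hne
  have hlhs : ∫ x in a..b, (π / 2 * (1 / x) - 1 / c) = π / 2 * log (b / a) - (b - a) / c := by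
    rw [intervalIntegral.integral_sub (hinv.intervalIntegrable.const_mul _)
        intervalIntegrable_const,
      intervalIntegral.integral_const_mul, integral_one_div fun h => hne 0 h rfl,
      intervalIntegral.integral_const, smul_eq_mul]
    ring
  rw [← hlhs]
  refine intervalIntegral.integral_mono_on hab
    ((hinv.intervalIntegrable.const_mul _).sub intervalIntegrable_const)
    (ContinuousOn.intervalIntegrable ?_) fun x hx => ?_
  · exact (continuous_arctan.comp_continuousOn (continuousOn_const.div continuousOn_id hne)).div
      continuousOn_id hne
  · have hx0 : 0 < x := ha.trans_le hx.1
    have := pi_div_two_sub_div_le_arctan_div hx0 hc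
    calc π / 2 * (1 / x) - 1 / c = (π / 2 - x / c) / x := by field_simp
      _ ≤ arctan (c / x) / x := by gcongr

lemma integrableOn_one_div_sq_add_sq_Ioc_prod_Ioc {a b c : ℝ} (ha : 0 < a) :
    IntegrableOn (fun p : ℝ × ℝ => 1 / (p.1 ^ 2 + p.2 ^ 2)) (Ioc a b ×ˢ Ioc 0 c) := by
  have hcont : ContinuousOn (fun p : ℝ × ℝ => 1 / (p.1 ^ 2 + p.2 ^ 2)) (Icc a b ×ˢ Icc 0 c) :=
    continuousOn_const.div (by fun_prop) fun p hp => by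
      nlinarith [ha.trans_le hp.1.1, sq_nonneg p.2]
  exact (hcont.integrableOn_compact (isCompact_Icc.prod isCompact_Icc)).mono_set
    (prod_mono Ioc_subset_Icc_self Ioc_subset_Icc_self)

lemma setIntegral_Ioc_prod_Ioc_one_div_sq_add_sq {a b c : ℝ} (ha : 0 < a) (hab : a ≤ b)
    (hc : 0 ≤ c) :
    ∫ p in Ioc a b ×ˢ Ioc 0 c, 1 / (p.1 ^ 2 + p.2 ^ 2) = ∫ x in a..b, arctan (c / x) / x := by
  refine (setIntegral_prod _ (integrableOn_one_div_sq_add_sq_Ioc_prod_Ioc ha)).trans ?_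
  rw [intervalIntegral.integral_of_le hab]
  refine setIntegral_congr_fun measurableSet_Ioc fun x hx => ?_
  rw [← intervalIntegral.integral_of_le hc, integral_one_div_sq_add_sq (ha.trans hx.1)]

lemma setIntegral_one_div_sq_add_sq_le {a b c : ℝ} {t : Set (ℝ × ℝ)} (ha : 0 < a) (hb : b < 1)
    (ht : IntegrableOn (fun p => 1 / latticeLaplacianSymbol p) t)
    (hst : Ioc a b ×ˢ Ioc 0 c ⊆ t) :
    ∫ p in Ioc a b ×ˢ Ioc 0 c, 1 / (p.1 ^ 2 + p.2 ^ 2) ≤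
      4 * π ^ 2 * ∫ p in t, 1 / latticeLaplacianSymbol p := by
  calc ∫ p in Ioc a b ×ˢ Ioc 0 c, 1 / (p.1 ^ 2 + p.2 ^ 2)
      ≤ ∫ p in Ioc a b ×ˢ Ioc 0 c, 4 * π ^ 2 * (1 / latticeLaplacianSymbol p) := by
        refine setIntegral_mono_on (integrableOn_one_div_sq_add_sq_Ioc_prod_Ioc ha)
          ((ht.mono_set hst).const_mul _) (measurableSet_Ioc.prod measurableSet_Ioc)
          fun p ⟨hx, _⟩ => ?_
        have hx0 : 0 < p.1 := ha.trans hx.1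
        have hpos := latticeLaplacianSymbol.pos (Or.inl ⟨hx0, hx.2.trans_lt hb⟩)
        rw [mul_one_div, div_le_div_iff₀ (by positivity) hpos]
        linarith [latticeLaplacianSymbol.le_four_mul_pi_sq_mul p]
    _ = 4 * π ^ 2 * ∫ p in Ioc a b ×ˢ Ioc 0 c, 1 / latticeLaplacianSymbol p :=
        integral_const_mul _ _
    _ ≤ 4 * π ^ 2 * ∫ p in t, 1 / latticeLaplacianSymbol p := by
        gcongr
        exact ae_of_all _ fun p => one_div_nonneg.mpr (latticeLaplacianSymbol.nonneg p)

lemma setIntegral_one_div_latticeLaplacianSymbol_ge {a b : ℝ} (ha : 0 < a) (ha' : a ≤ 1 / 2)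
    (hb : 0 < b) :
    π / 2 * log (1 / (2 * a)) - (1 - 2 * a) ≤
      4 * π ^ 2 * ∫ p in (Icc 0 (1 / 2) ×ˢ Icc 0 (1 / 2)) \ (Icc 0 a ×ˢ Icc 0 b),
        1 / latticeLaplacianSymbol p := by
  have hstrip : Ioc a (1 / 2) ×ˢ Ioc 0 (1 / 2) ⊆ (Icc 0 (1 / 2) ×ˢ Icc 0 (1 / 2)) \
      (Icc 0 a ×ˢ Icc 0 b) := fun p ⟨hx, hy⟩ =>
    ⟨⟨⟨(ha.trans hx.1).le, hx.2⟩, hy.1.le, hy.2⟩, fun h => (hx.1.trans_le h.1.2).false⟩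
  calc π / 2 * log (1 / (2 * a)) - (1 - 2 * a)
        = π / 2 * log ((1 / 2) / a) - (1 / 2 - a) / (1 / 2) := by ring_nf
    _ ≤ ∫ x in a..1 / 2, arctan ((1 / 2) / x) / x :=
        integral_arctan_div_div_ge ha ha' one_half_pos
    _ = ∫ p in Ioc a (1 / 2) ×ˢ Ioc 0 (1 / 2), 1 / (p.1 ^ 2 + p.2 ^ 2) :=
        (setIntegral_Ioc_prod_Ioc_one_div_sq_add_sq ha ha' one_half_pos.le).symm
    _ ≤ _ := setIntegral_one_div_sq_add_sq_le ha (by norm_num)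
        (integrableOn_one_div_latticeLaplacianSymbol ha hb (by norm_num)) hstrip

theorem integral_Dstar_lower (M1 M2 : ℕ) (h1 : 4 ≤ M1) (h12 : M1 ≤ M2) :
    4 * ∫ p in ((Set.Icc (0:ℝ) (1/2) ×ˢ Set.Icc (0:ℝ) (1/2)) \
        (Set.Icc (0:ℝ) (1/(M1:ℝ)) ×ˢ Set.Icc (0:ℝ) (1/(M2:ℝ)))),
        1 / (4 - 2 * Real.cos (2 * Real.pi * p.1) - 2 * Real.cos (2 * Real.pi * p.2))
      ≥ (1 / (2 * Real.pi)) * Real.log M1 - 1 / 4 := by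
  have hM1 : (4 : ℝ) ≤ M1 := by exact_mod_cast h1
  have hM2 : (4 : ℝ) ≤ M2 := by exact_mod_cast h1.trans h12
  have hbound := setIntegral_one_div_latticeLaplacianSymbol_ge (a := 1 / M1) (b := 1 / M2)
    (by positivity) (by rw [div_le_div_iff₀ (by positivity) (by norm_num)]; linarith)
    (by positivity)
  set I := ∫ p in (Icc 0 (1 / 2) ×ˢ Icc 0 (1 / 2)) \
    (Icc 0 (1 / (M1 : ℝ)) ×ˢ Icc 0 (1 / (M2 : ℝ))), 1 / latticeLaplacianSymbol p
  have hlog : log (1 / (2 * (1 / M1))) = log M1 - log 2 := by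
    rw [show 1 / (2 * (1 / (M1 : ℝ))) = M1 / 2 by field_simp, log_div (by positivity) two_ne_zero]
  have hnum : 2 * π * log 2 + 4 ≤ π ^ 2 := by nlinarith [pi_gt_three, log_two_lt_d9]
  change _ ≤ 4 * I
  rw [hlog] at hbound
  calc 1 / (2 * π) * log M1 - 1 / 4 = (π / 2 * log M1 - π ^ 2 / 4) / π ^ 2 := by field_simp
    _ ≤ (π / 2 * (log M1 - log 2) - (1 - 2 * (1 / M1))) / π ^ 2 := by
        gcongr ?_ / _
        have : (0 : ℝ) < 1 / M1 := by positivity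
        linarith
    _ ≤ 4 * π ^ 2 * I / π ^ 2 := by gcongr
    _ = 4 * I := by field_simp
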